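/- If G is a 6-regular finite simple graph, then in every CPG representation of G no path has a free endpoint, i.e., each endpoint of each path belongs to some other path of the representation. -/

import Mathlib

/-! ## Grid paths and CPG representations -/

/-- Two grid points of `ℤ × ℤ` at L¹-distance 1 (i.e. joined by a unit grid segment). -/
def GridStep (p q : ℤ × ℤ) : Prop :=
  (p.1 - q.1).natAbs + (p.2 - q.2).natAbs = 1

/-- A grid path: a sequence of at least two grid points, consecutive points at distance 1,
with no repeated grid point (so the traced curve neither crosses nor retraces itself). -/
structure GridPath where
  pts : List (ℤ × ℤ)
  two_le_length : 2 ≤ pts.length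
  step : pts.Chain' GridStep
  nodup : pts.Nodup

namespace GridPath

theorem ne_nil (P : GridPath) : P.pts ≠ [] := by
  intro h
  have h2 := P.two_le_length
  rw [h] at h2
  simp at h2

/-- The set of grid points of a grid path. -/
def toSet (P : GridPath) : Set (ℤ × ℤ) := {p | p ∈ P.pts}

/-- The first extreme point of a grid path. -/
def first (P : GridPath) : ℤ × ℤ := P.pts.head P.ne_nil

/-- The second extreme point of a grid path. -/
def last (P : GridPath) : ℤ × ℤ := P.pts.getLast P.ne_nil

/-- `p` is an endpoint (extreme point) of the grid path `P`. -/
def IsEndpoint (P : GridPath) (p : ℤ × ℤ) : Prop := p = P.first ∨ p = P.last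

/-- `p` is an interior grid point of `P`: it lies on `P` but is not an endpoint. -/
def IsInterior (P : GridPath) (p : ℤ × ℤ) : Prop := p ∈ P.toSet ∧ ¬ P.IsEndpoint p

/-- `p` is a bend of `P`: an interior grid point at which `P` turns 90 degrees. -/
def IsBend (P : GridPath) (p : ℤ × ℤ) : Prop :=
  ∃ a c : ℤ × ℤ, [a, p, c] <:+: P.pts ∧ a.1 ≠ c.1 ∧ a.2 ≠ c.2

/-- The set of bend points of `P`. -/
def bendSet (P : GridPath) : Set (ℤ × ℤ) := {p | P.IsBend p}

/-- `P` has at most `k` bends. -/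
def BendsAtMost (P : GridPath) (k : ℕ) : Prop := P.bendSet.ncard ≤ k

end GridPath

/-- `p` and `q` are consecutive grid points of the list `l` (in either order);
equivalently, the path traced by `l` uses the unit grid segment joining `p` and `q`. -/
def ConsecIn (l : List (ℤ × ℤ)) (p q : ℤ × ℤ) : Prop :=
  [p, q] <:+: l ∨ [q, p] <:+: l

/-- A CPG representation of a simple graph `G`: a family of pairwise interiorly disjoint
grid paths, one for each vertex, such that two distinct vertices are adjacent iff the
corresponding paths have a common point. -/
structure CPGRep {V : Type*} (G : SimpleGraph V) where
  path : V → GridPath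
  interiorly_disjoint : ∀ u v : V, u ≠ v → ∀ p : ℤ × ℤ,
    p ∈ (path u).toSet → p ∈ (path v).toSet →
    (path u).IsEndpoint p ∨ (path v).IsEndpoint p
  no_shared_segment : ∀ u v : V, u ≠ v → ∀ p q : ℤ × ℤ,
    ConsecIn (path u).pts p q → ¬ ConsecIn (path v).pts p q
  adj_iff : ∀ u v : V, u ≠ v →
    (G.Adj u v ↔ ∃ p : ℤ × ℤ, p ∈ (path u).toSet ∧ p ∈ (path v).toSet)

namespace CPGRep

variable {V : Type*} {G : SimpleGraph V}

/-- A `k`-bend CPG representation: every path has at most `k` bends. -/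
def BendsAtMost (R : CPGRep G) (k : ℕ) : Prop :=
  ∀ u : V, (R.path u).BendsAtMost k

/-- `p` is a free endpoint of the path of `u`: an endpoint of `R.path u`
belonging to no other path of the representation. -/
def FreeEndpoint (R : CPGRep G) (u : V) (p : ℤ × ℤ) : Prop :=
  (R.path u).IsEndpoint p ∧ ∀ v : V, v ≠ u → p ∉ (R.path v).toSet

end CPGRep

/-- A graph is CPG if it admits a CPG representation. -/
def IsCPG {V : Type*} (G : SimpleGraph V) : Prop := Nonempty (CPGRep G)

/-- A graph is `B_k`-CPG if it admits a CPG representation in which every path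
has at most `k` bends. -/
def IsBkCPG {V : Type*} (G : SimpleGraph V) (k : ℕ) : Prop :=
  ∃ R : CPGRep G, R.BendsAtMost k

section Aux

/-- the four grid neighbours of `p` -/
def nbrsOf (p : ℤ × ℤ) : Finset (ℤ × ℤ) :=
  {(p.1+1,p.2),(p.1-1,p.2),(p.1,p.2+1),(p.1,p.2-1)}

lemma card_nbrsOf (p : ℤ × ℤ) : (nbrsOf p).card = 4 := by
  obtain ⟨x, y⟩ := p
  rw [nbrsOf]
  rw [Finset.card_insert_of_notMem (by simp [Prod.ext_iff] <;> omega),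
      Finset.card_insert_of_notMem (by simp [Prod.ext_iff] <;> omega),
      Finset.card_insert_of_notMem (by simp [Prod.ext_iff] <;> omega),
      Finset.card_singleton]

lemma mem_nbrsOf {p q : ℤ × ℤ} (h : GridStep p q) : q ∈ nbrsOf p := by
  obtain ⟨x, y⟩ := p; obtain ⟨a, b⟩ := q
  unfold GridStep at h
  simp only [nbrsOf, Finset.mem_insert, Finset.mem_singleton, Prod.ext_iff] at *
  omega

lemma step_of_consec (P : GridPath) {p q : ℤ × ℤ} (h : ConsecIn P.pts p q) : GridStep p q := by
  rcases h with h | h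
  · exact (List.isChain_pair.mp (P.step.infix h))
  · have := (List.isChain_pair.mp (P.step.infix h))
    unfold GridStep at *; omega

lemma exists_consec (P : GridPath) {p : ℤ × ℤ} (hp : p ∈ P.toSet) :
    ∃ q, ConsecIn P.pts p q := by
  obtain ⟨s, t, hst⟩ := List.append_of_mem hp
  rcases t with _ | ⟨q, t'⟩
  · rcases List.eq_nil_or_concat s with rfl | ⟨L, b, rfl⟩
    · exfalso; have := P.two_le_length; rw [hst] at this; simp at this
    · exact ⟨b, Or.inr ⟨L, [], by simp [hst, List.concat_eq_append]⟩⟩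
  · exact ⟨q, Or.inl ⟨s, t', by simp [hst]⟩⟩

lemma two_consec (P : GridPath) {p : ℤ × ℤ} (hp : P.IsInterior p) :
    ∃ q r, q ≠ r ∧ ConsecIn P.pts p q ∧ ConsecIn P.pts p r := by
  obtain ⟨hmem, hne⟩ := hp
  obtain ⟨s, t, hst⟩ := List.append_of_mem hmem
  have hs : s ≠ [] := by
    rintro rfl
    exact hne (Or.inl (by simp [GridPath.first, hst]))
  have ht : t ≠ [] := by
    rintro rfl
    refine hne (Or.inr ?_)
    have : P.pts.getLast P.ne_nil = p := by
      simp only [hst]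
      exact List.getLast_append _
    simp [GridPath.last, this]
  rcases List.eq_nil_or_concat s with rfl | ⟨L, b, rfl⟩
  · exact absurd rfl hs
  rcases t with _ | ⟨c, t'⟩
  · exact absurd rfl ht
  have hinf : [b, p, c] <:+: P.pts := ⟨L, t', by simp [hst, List.concat_eq_append]⟩
  have hnd : ([b, p, c] : List (ℤ × ℤ)).Nodup := (P.nodup).sublist hinf.sublist
  have hbc : b ≠ c := by simp at hnd; tauto
  refine ⟨b, c, hbc, Or.inr ⟨L, c :: t', by simp [hst, List.concat_eq_append]⟩,
    Or.inl ⟨L ++ [b], t', by simp [hst, List.concat_eq_append]⟩⟩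

lemma head_ne_getLast {α : Type*} (l : List α) (hne : l ≠ []) (h2 : 2 ≤ l.length)
    (hnd : l.Nodup) : l.head hne ≠ l.getLast hne := by
  cases l with
  | nil => contradiction
  | cons a l' =>
    have hl' : l' ≠ [] := by rintro rfl; simp at h2
    simp only [List.head_cons, List.getLast_cons hl']
    rw [List.nodup_cons] at hnd
    intro h; exact hnd.1 (h ▸ List.getLast_mem hl')

lemma first_ne_last (P : GridPath) : P.first ≠ P.last :=
  head_ne_getLast P.pts P.ne_nil P.two_le_length P.nodup

lemma arith_core (t e i : ℕ) (ht : t = e + i) (hi : i ≤ 1) (hseg : e + 2 * i ≤ 4) :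
    t * t - t ≤ 3 * e := by
  have h4 : t ≤ 5 := by omega
  interval_cases t <;> omega

end Aux

/-- If `G` is a 6-regular finite simple graph, then in every CPG representation of `G` no
path has a free endpoint: each endpoint of each path belongs to some other path. -/
theorem no_free_endpoint_of_six_regular
    (V : Type) [Fintype V] (G : SimpleGraph V)
    (hreg : ∀ v : V, (G.neighborSet v).ncard = 6) (R : CPGRep G) :
    ∀ (u : V) (p : ℤ × ℤ), (R.path u).IsEndpoint p →
      ∃ v : V, v ≠ u ∧ p ∈ (R.path v).toSet := by
  classical
  intro u p hend
  by_contra hfree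
  push_neg at hfree
  set n := Fintype.card V with hn
  set Pts : Finset (ℤ × ℤ) := Finset.univ.biUnion (fun v => (R.path v).pts.toFinset) with hPtsdef
  have mem_Pts : ∀ (v : V) (q : ℤ × ℤ), q ∈ (R.path v).toSet → q ∈ Pts := by
    intro v q hq
    exact Finset.mem_biUnion.mpr ⟨v, Finset.mem_univ v, List.mem_toFinset.mpr hq⟩
  have endpoint_mem : ∀ (v : V) (q : ℤ × ℤ), (R.path v).IsEndpoint q → q ∈ (R.path v).toSet := by
    intro v q hq
    rcases hq with rfl | rfl
    · exact List.head_mem _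
    · exact List.getLast_mem _
  set eCnt : ℤ × ℤ → ℕ :=
    fun q => (Finset.univ.filter (fun v => (R.path v).IsEndpoint q)).card with heCnt
  have hsumE : ∑ q ∈ Pts, eCnt q = 2 * n := by
    have h1 : ∀ v : V, (Pts.filter (fun q => (R.path v).IsEndpoint q)).card = 2 := by
      intro v
      have hfe : Pts.filter (fun q => (R.path v).IsEndpoint q)
          = {(R.path v).first, (R.path v).last} := by
        ext q
        simp only [Finset.mem_filter, Finset.mem_insert, Finset.mem_singleton]
        constructor
        · rintro ⟨-, h⟩; exact h
        · intro h
          exact ⟨mem_Pts v q (endpoint_mem v q h), h⟩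
      rw [hfe, Finset.card_pair (first_ne_last _)]
    calc ∑ q ∈ Pts, eCnt q
        = ∑ q ∈ Pts, ∑ v : V, (if (R.path v).IsEndpoint q then 1 else 0) := by
          refine Finset.sum_congr rfl fun q _ => ?_
          simp only [heCnt]
          exact Finset.card_filter _ _
      _ = ∑ v : V, ∑ q ∈ Pts, (if (R.path v).IsEndpoint q then 1 else 0) := Finset.sum_comm
      _ = ∑ v : V, 2 := by
          refine Finset.sum_congr rfl fun v _ => ?_
          rw [← Finset.card_filter]
          exact h1 v
      _ = 2 * n := by simp [hn, mul_comm]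
  set A : Finset (V × V) := Finset.univ.filter (fun x => G.Adj x.1 x.2) with hA
  have hAcard : A.card = 6 * n := by
    have hfib : A.card = ∑ v : V, (A.filter (fun x => x.1 = v)).card :=
      Finset.card_eq_sum_card_fiberwise (fun x _ => Finset.mem_univ x.1)
    have hdeg : ∀ v : V, (A.filter (fun x => x.1 = v)).card = 6 := by
      intro v
      have hb : A.filter (fun x => x.1 = v) = (G.neighborFinset v).image (fun b => (v, b)) := by
        ext ⟨a, b⟩
        simp only [hA, Finset.mem_filter, Finset.mem_univ, true_and, Finset.mem_image,
          SimpleGraph.mem_neighborFinset, Prod.ext_iff]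
        constructor
        · rintro ⟨hadj, rfl⟩
          exact ⟨b, hadj, rfl, rfl⟩
        · rintro ⟨c, hadj, rfl, rfl⟩
          exact ⟨hadj, rfl⟩
      rw [hb, Finset.card_image_of_injective _ (fun x y h => by simpa using h),
        ← Set.ncard_coe_finset, SimpleGraph.neighborFinset_def, Set.coe_toFinset]
      exact hreg v
    rw [hfib]
    simp [hdeg, hn, mul_comm]
  have hwit : ∀ x : V × V, x ∈ A →
      ∃ q : ℤ × ℤ, q ∈ (R.path x.1).toSet ∧ q ∈ (R.path x.2).toSet := by
    intro x hx
    simp only [hA, Finset.mem_filter, Finset.mem_univ, true_and] at hx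
    exact (R.adj_iff x.1 x.2 hx.ne).mp hx
  choose! w hw1 hw2 using hwit
  have hfib : A.card = ∑ q ∈ Pts, (A.filter (fun x => w x = q)).card :=
    Finset.card_eq_sum_card_fiberwise (fun x hx => mem_Pts _ _ (hw1 x hx))
  have hpoint : ∀ q : ℤ × ℤ, (A.filter (fun x => w x = q)).card ≤ 3 * eCnt q := by
    intro q
    set S : Finset V := Finset.univ.filter (fun v => q ∈ (R.path v).toSet) with hS
    set E : Finset V := Finset.univ.filter (fun v => (R.path v).IsEndpoint q) with hE
    set I : Finset V := Finset.univ.filter (fun v => (R.path v).IsInterior q) with hI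
    have hsub : A.filter (fun x => w x = q) ⊆ S.offDiag := by
      rintro ⟨a, b⟩ hx
      simp only [Finset.mem_filter] at hx
      obtain ⟨hxA, hxw⟩ := hx
      have hadj : G.Adj a b := by
        have := hxA; simp only [hA, Finset.mem_filter, Finset.mem_univ, true_and] at this
        exact this
      refine Finset.mem_offDiag.mpr ⟨?_, ?_, hadj.ne⟩
      · simp only [hS, Finset.mem_filter, Finset.mem_univ, true_and]
        exact hxw ▸ hw1 _ hxA
      · simp only [hS, Finset.mem_filter, Finset.mem_univ, true_and]
        exact hxw ▸ hw2 _ hxA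
    have hcard1 : (A.filter (fun x => w x = q)).card ≤ S.card * S.card - S.card := by
      calc (A.filter (fun x => w x = q)).card ≤ S.offDiag.card := Finset.card_le_card hsub
        _ = S.card * S.card - S.card := Finset.offDiag_card S
    have hSE : S = E ∪ I := by
      ext v
      simp only [hS, hE, hI, Finset.mem_union, Finset.mem_filter, Finset.mem_univ, true_and]
      simp only [GridPath.IsInterior]
      constructor
      · intro h
        by_cases he : (R.path v).IsEndpoint q
        · exact Or.inl he
        · exact Or.inr ⟨h, he⟩
      · rintro (h | ⟨h, -⟩)
        · exact endpoint_mem v q h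
        · exact h
    have hdisj : Disjoint E I := by
      rw [Finset.disjoint_left]
      intro v hv hv'
      simp only [hE, Finset.mem_filter] at hv
      simp only [hI, Finset.mem_filter] at hv'
      simp only [GridPath.IsInterior] at hv'
      exact hv'.2.2 hv.2
    have hScard : S.card = E.card + I.card := by
      rw [hSE, Finset.card_union_of_disjoint hdisj]
    have hIle : I.card ≤ 1 := by
      rw [Finset.card_le_one]
      intro a ha b hb
      by_contra hab
      simp only [hI, Finset.mem_filter, Finset.mem_univ, true_and] at ha hb
      simp only [GridPath.IsInterior] at ha hb
      rcases R.interiorly_disjoint a b hab q ha.1 hb.1 with h | h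
      · exact ha.2 h
      · exact hb.2 h
    have hsegbd : E.card + 2 * I.card ≤ 4 := by
      set segs : V → Finset (ℤ × ℤ) := fun v =>
        (nbrsOf q).filter (fun r => ConsecIn (R.path v).pts q r) with hsegs
      have hdisj2 : ∀ a ∈ S, ∀ b ∈ S, a ≠ b → Disjoint (segs a) (segs b) := by
        intro a _ b _ hab
        rw [Finset.disjoint_left]
        intro r hra hrb
        simp only [hsegs, Finset.mem_filter] at hra hrb
        exact R.no_shared_segment a b hab q r hra.2 hrb.2
      have hcover : ∑ v ∈ S, (segs v).card ≤ 4 := by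
        rw [← Finset.card_biUnion hdisj2]
        calc (S.biUnion segs).card ≤ (nbrsOf q).card := by
              apply Finset.card_le_card
              intro r hr
              simp only [Finset.mem_biUnion] at hr
              obtain ⟨v, -, hv⟩ := hr
              exact (Finset.mem_filter.mp hv).1
          _ = 4 := card_nbrsOf q
      have hge : E.card + 2 * I.card ≤ ∑ v ∈ S, (segs v).card := by
        rw [hSE, Finset.sum_union hdisj]
        have hE1 : ∀ v ∈ E, 1 ≤ (segs v).card := by
          intro v hv
          simp only [hE, Finset.mem_filter, Finset.mem_univ, true_and] at hv
          obtain ⟨r, hr⟩ := exists_consec (R.path v) (endpoint_mem v q hv)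
          have hrs : r ∈ segs v := by
            simp only [hsegs, Finset.mem_filter]
            exact ⟨mem_nbrsOf (step_of_consec _ hr), hr⟩
          exact Finset.card_pos.mpr ⟨r, hrs⟩
        have hI2 : ∀ v ∈ I, 2 ≤ (segs v).card := by
          intro v hv
          simp only [hI, Finset.mem_filter, Finset.mem_univ, true_and] at hv
          obtain ⟨r, r', hrr', hr, hr'⟩ := two_consec (R.path v) hv
          have h1 : r ∈ segs v := by
            simp only [hsegs, Finset.mem_filter]
            exact ⟨mem_nbrsOf (step_of_consec _ hr), hr⟩
          have h2 : r' ∈ segs v := by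
            simp only [hsegs, Finset.mem_filter]
            exact ⟨mem_nbrsOf (step_of_consec _ hr'), hr'⟩
          exact Finset.one_lt_card.mpr ⟨r, h1, r', h2, hrr'⟩
        calc E.card + 2 * I.card = ∑ _v ∈ E, 1 + ∑ _v ∈ I, 2 := by
              simp [mul_comm]
          _ ≤ ∑ v ∈ E, (segs v).card + ∑ v ∈ I, (segs v).card :=
              Nat.add_le_add (Finset.sum_le_sum hE1) (Finset.sum_le_sum hI2)
      exact le_trans hge hcover
    have harith : S.card * S.card - S.card ≤ 3 * E.card :=
      arith_core S.card E.card I.card hScard hIle (by omega)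
    calc (A.filter (fun x => w x = q)).card ≤ S.card * S.card - S.card := hcard1
      _ ≤ 3 * E.card := harith
      _ = 3 * eCnt q := rfl
  have hpPts : p ∈ Pts := mem_Pts u p (endpoint_mem u p hend)
  have hfibp : (A.filter (fun x => w x = p)) = ∅ := by
    rw [Finset.eq_empty_iff_forall_notMem]
    rintro ⟨a, b⟩ hx
    simp only [Finset.mem_filter] at hx
    obtain ⟨hxA, hxw⟩ := hx
    have hadj : G.Adj a b := by
      have := hxA; simp only [hA, Finset.mem_filter, Finset.mem_univ, true_and] at this
      exact this
    have h1 := hxw ▸ hw1 _ hxA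
    have h2 := hxw ▸ hw2 _ hxA
    by_cases ha : a = u
    · exact hfree b (fun h => hadj.ne (ha.trans h.symm)) h2
    · exact hfree a ha h1
  have heCntp : 1 ≤ eCnt p := by
    have : u ∈ Finset.univ.filter (fun v => (R.path v).IsEndpoint p) := by
      simp [hend]
    have := Finset.card_pos.mpr ⟨u, this⟩
    simpa [heCnt] using this
  have hlt : ∑ q ∈ Pts, (A.filter (fun x => w x = q)).card < ∑ q ∈ Pts, 3 * eCnt q := by
    apply Finset.sum_lt_sum (fun q _ => hpoint q)
    refine ⟨p, hpPts, ?_⟩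
    rw [hfibp]
    simp only [Finset.card_empty]
    omega
  rw [← hfib] at hlt
  have hsum3 : ∑ q ∈ Pts, 3 * eCnt q = 3 * (2 * n) := by
    rw [← Finset.mul_sum, hsumE]
  omega
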